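/- Let 𝔬_ℓ be a finite quotient of a complete discrete valuation ring and let ξ̃ = j(ξ̃₁, ξ̃₂) = diag(ξ̃₁, ξ̃₂) ∈ gl_d(𝔬_ℓ) be block diagonal, where the reductions of ξ̃₁ ∈ Mat_{d₁}(𝔬_ℓ) and ξ̃₂ ∈ Mat_{d₂}(𝔬_ℓ) modulo the maximal ideal have coprime characteristic polynomials. Then the centralizer of ξ̃ in GL_d(𝔬_ℓ) is contained in the block-diagonal subgroup GL_{d₁}(𝔬_ℓ) × GL_{d₂}(𝔬_ℓ), and equals the product of the centralizers: C_{GL_d(𝔬_ℓ)}(ξ̃) ≅ C_{GL_{d₁}(𝔬_ℓ)}(ξ̃₁) × C_{GL_{d₂}(𝔬_ℓ)}(ξ̃₂). -/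

import Mathlib

/-!
If `V ξ₂ = ξ₁ V`, then `V χ(ξ₂) = χ(ξ₁) V` for every polynomial `χ`; taking `χ` the
characteristic polynomial of `ξ₁` gives `V χ(ξ₂) = 0` by Cayley–Hamilton. Coprimality of the
residual characteristic polynomials makes `χ(ξ₂)` invertible modulo the maximal ideal, hence
invertible, since `𝔬_ℓ` is local. So the off-diagonal blocks of anything commuting with
`diag(ξ₁, ξ₂)` vanish, and a block-diagonal matrix is invertible iff its blocks are.
-/

open Matrix Polynomial

namespace Matrix

theorem commute_fromBlocks_zero_zero_iff {l m α : Type*} [Fintype l] [Fintype m]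
    [Semiring α] (u : Matrix (l ⊕ m) (l ⊕ m) α) (A : Matrix l l α) (D : Matrix m m α) :
    Commute u (fromBlocks A 0 0 D) ↔
      Commute u.toBlocks₁₁ A ∧ u.toBlocks₁₂ * D = A * u.toBlocks₁₂ ∧
        u.toBlocks₂₁ * A = D * u.toBlocks₂₁ ∧ Commute u.toBlocks₂₂ D := by
  conv_lhs => rw [← fromBlocks_toBlocks u]
  simp only [Commute, SemiconjBy, fromBlocks_multiply, fromBlocks_inj, Matrix.mul_zero,
    Matrix.zero_mul, add_zero, zero_add]

variable {m n R S : Type*} [Fintype m] [DecidableEq m] [Fintype n] [DecidableEq n]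
  [CommRing R] [CommRing S]

theorem isUnit_of_isUnit_map (f : R →+* S) [IsLocalHom f] {M : Matrix n n R}
    (hM : IsUnit (M.map f)) : IsUnit M := by
  rw [isUnit_iff_isUnit_det] at hM ⊢
  exact (isUnit_map_iff f _).mp (by rwa [RingHom.map_det])

theorem map_aeval (f : R →+* S) (M : Matrix n n R) (p : R[X]) :
    (aeval M p).map f = aeval (M.map f) (p.map f) :=
  map_aeval_eq_aeval_map (ψ := f.mapMatrix)
    (by ext; simp [algebraMap_eq_diagonal, diagonal_apply, apply_ite f]) p M

theorem mul_aeval_of_mul_eq_mul {A : Matrix m m R} {B : Matrix n n R} {V : Matrix m n R}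
    (hV : V * B = A * V) (p : R[X]) : V * aeval B p = aeval A p * V := by
  have hpow (k : ℕ) : V * B ^ k = A ^ k * V := by
    induction k with
    | zero => simp
    | succ k ih => rw [pow_succ, pow_succ, ← Matrix.mul_assoc, ih, Matrix.mul_assoc, hV,
        Matrix.mul_assoc]
  induction p using Polynomial.induction_on' with
  | add p q hp hq => rw [map_add, map_add, Matrix.mul_add, Matrix.add_mul, hp, hq]
  | monomial k a =>
    simp only [aeval_monomial, ← Algebra.smul_def, Matrix.mul_smul, Matrix.smul_mul, hpow]

theorem isUnit_aeval_charpoly_of_isCoprime {A : Matrix m m R} {B : Matrix n n R}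
    (h : IsCoprime A.charpoly B.charpoly) : IsUnit (aeval B A.charpoly) := by
  obtain ⟨a, b, hab⟩ := h
  refine IsUnit.of_mul_eq_one (aeval B a) ?_
  have := congrArg (aeval B) hab
  rwa [map_add, map_mul, map_mul, aeval_self_charpoly, mul_zero, add_zero, ← map_mul, mul_comm,
    map_mul, map_one] at this

theorem eq_zero_of_mul_eq_mul_of_isUnit_aeval_charpoly {A : Matrix m m R} {B : Matrix n n R}
    {V : Matrix m n R} (hV : V * B = A * V) (h : IsUnit (aeval B A.charpoly)) : V = 0 := by
  have : V * aeval B A.charpoly = 0 := by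
    rw [mul_aeval_of_mul_eq_mul hV, aeval_self_charpoly, Matrix.zero_mul]
  calc V = V * aeval B A.charpoly * (h.unit⁻¹ : (Matrix n n R)ˣ).val := by
        rw [Matrix.mul_assoc, IsUnit.mul_val_inv, Matrix.mul_one]
    _ = 0 := by rw [this, Matrix.zero_mul]

theorem eq_zero_of_mul_eq_mul_of_isCoprime_charpoly_map (f : R →+* S) [IsLocalHom f]
    {A : Matrix m m R} {B : Matrix n n R} {V : Matrix m n R} (hV : V * B = A * V)
    (hAB : IsCoprime (A.map f).charpoly (B.map f).charpoly) : V = 0 := by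
  refine eq_zero_of_mul_eq_mul_of_isUnit_aeval_charpoly hV (isUnit_of_isUnit_map f ?_)
  rw [map_aeval, ← charpoly_map]
  exact isUnit_aeval_charpoly_of_isCoprime hAB

end Matrix

theorem centralizer_of_block_diagonal
    (O : Type*) [CommRing O] [IsDomain O] [IsDiscreteValuationRing O]
    (R : Type*) [CommRing R] (q : O →+* R) (hq : Function.Surjective q)
    (r : R →+* O ⧸ IsLocalRing.maximalIdeal O)
    (hr : r.comp q = Ideal.Quotient.mk (IsLocalRing.maximalIdeal O))
    (d₁ d₂ : ℕ)
    (ξ₁ : Matrix (Fin d₁) (Fin d₁) R) (ξ₂ : Matrix (Fin d₂) (Fin d₂) R)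
    (hcop : IsCoprime ((ξ₁.map r).charpoly) ((ξ₂.map r).charpoly))
    (ξ : Matrix (Fin d₁ ⊕ Fin d₂) (Fin d₁ ⊕ Fin d₂) R)
    (hξ : ξ = Matrix.fromBlocks ξ₁ 0 0 ξ₂) :
    (∀ u : (Matrix (Fin d₁ ⊕ Fin d₂) (Fin d₁ ⊕ Fin d₂) R)ˣ,
      (u : Matrix (Fin d₁ ⊕ Fin d₂) (Fin d₁ ⊕ Fin d₂) R) * ξ = ξ * u →
        (u : Matrix (Fin d₁ ⊕ Fin d₂) (Fin d₁ ⊕ Fin d₂) R).toBlocks₁₂ = 0 ∧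
        (u : Matrix (Fin d₁ ⊕ Fin d₂) (Fin d₁ ⊕ Fin d₂) R).toBlocks₂₁ = 0 ∧
        IsUnit (u : Matrix (Fin d₁ ⊕ Fin d₂) (Fin d₁ ⊕ Fin d₂) R).toBlocks₁₁ ∧
        IsUnit (u : Matrix (Fin d₁ ⊕ Fin d₂) (Fin d₁ ⊕ Fin d₂) R).toBlocks₂₂ ∧
        (u : Matrix (Fin d₁ ⊕ Fin d₂) (Fin d₁ ⊕ Fin d₂) R).toBlocks₁₁ * ξ₁ =
          ξ₁ * (u : Matrix (Fin d₁ ⊕ Fin d₂) (Fin d₁ ⊕ Fin d₂) R).toBlocks₁₁ ∧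
        (u : Matrix (Fin d₁ ⊕ Fin d₂) (Fin d₁ ⊕ Fin d₂) R).toBlocks₂₂ * ξ₂ =
          ξ₂ * (u : Matrix (Fin d₁ ⊕ Fin d₂) (Fin d₁ ⊕ Fin d₂) R).toBlocks₂₂) ∧
    (∀ (u₁ : Matrix (Fin d₁) (Fin d₁) R) (u₂ : Matrix (Fin d₂) (Fin d₂) R),
      IsUnit u₁ → IsUnit u₂ → u₁ * ξ₁ = ξ₁ * u₁ → u₂ * ξ₂ = ξ₂ * u₂ →
        IsUnit (Matrix.fromBlocks u₁ 0 0 u₂) ∧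
        Matrix.fromBlocks u₁ 0 0 u₂ * ξ = ξ * Matrix.fromBlocks u₁ 0 0 u₂) := by
  have : Nontrivial R := r.domain_nontrivial
  have : IsLocalRing R := .of_surjective' q hq
  have hr_surj : Function.Surjective r := .of_comp (g := q) <| by
    rw [← RingHom.coe_comp, hr]
    exact Ideal.Quotient.mk_surjective
  have : IsLocalHom r := .of_surjective r hr_surj
  subst hξ
  refine ⟨fun u hu ↦ ?_, fun u₁ u₂ hu₁ hu₂ hc₁ hc₂ ↦ ?_⟩
  · obtain ⟨h₁₁, h₁₂, h₂₁, h₂₂⟩ := (commute_fromBlocks_zero_zero_iff _ _ _).mp hu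
    have hu₁₂ := eq_zero_of_mul_eq_mul_of_isCoprime_charpoly_map r h₁₂ hcop
    have hu₂₁ := eq_zero_of_mul_eq_mul_of_isCoprime_charpoly_map r h₂₁ hcop.symm
    have hunit := u.isUnit
    rw [← fromBlocks_toBlocks u.val, hu₂₁, isUnit_fromBlocks_zero₂₁] at hunit
    exact ⟨hu₁₂, hu₂₁, hunit.1, hunit.2, h₁₁, h₂₂⟩
  · refine ⟨isUnit_fromBlocks_zero₂₁.mpr ⟨hu₁, hu₂⟩, ?_⟩
    exact (commute_fromBlocks_zero_zero_iff _ _ _).mpr (by simpa using ⟨hc₁, hc₂⟩)
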